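/- arXiv:1502.03177 — 3 statements merged into one kernel-verified Lean document; each statement's English description precedes it below -/
import Mathlib

section
/- Let F : ℝⁿ → ℝ be a smooth function, and define Φ : ℝⁿ × ℝⁿ → ℝ²ⁿ × ℝ²ⁿ, mapping (q,t) to the pair (X,Y),(x,y) where X_i = q_i + t_i, Y_i = ∂F/∂q_i + Σ_k t_k ∂²F/∂q_i∂q_k, x_i = t_i, y_i = Σ_k t_k ∂²F/∂q_i∂q_k. Then the pullback under Φ of the 2-form Σ dX_i ∧ dY_i equals the pullback of Σ dx_i ∧ dy_i; i.e., the map from the tangent sweep to the tangent cluster of the Lagrangian graph of dF preserves the standard symplectic form. -/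
open Finset

/-- Partial derivative `∂F/∂q_i` at `q`. -/
noncomputable def pd {n : ℕ} (F : (Fin n → ℝ) → ℝ) (i : Fin n) (q : Fin n → ℝ) : ℝ :=
  fderiv ℝ F q (Pi.single i 1)

/-- Second partial derivative `∂²F/∂q_i∂q_k` at `q`. -/
noncomputable def pd2 {n : ℕ} (F : (Fin n → ℝ) → ℝ) (i k : Fin n) (q : Fin n → ℝ) : ℝ :=
  fderiv ℝ (pd F i) q (Pi.single k 1)

lemma contDiff_pd {n : ℕ} {F : (Fin n → ℝ) → ℝ} (hF : ContDiff ℝ (⊤ : ℕ∞) F) (i : Fin n) :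
    ContDiff ℝ (⊤ : ℕ∞) (pd F i) :=
  (hF.fderiv_right (by simp)).clm_apply contDiff_const

lemma contDiff_pd2 {n : ℕ} {F : (Fin n → ℝ) → ℝ} (hF : ContDiff ℝ (⊤ : ℕ∞) F) (i k : Fin n) :
    ContDiff ℝ (⊤ : ℕ∞) (pd2 F i k) :=
  ((contDiff_pd hF i).fderiv_right (by simp)).clm_apply contDiff_const

lemma clm_eval {n : ℕ} (L : (Fin n → ℝ) →L[ℝ] ℝ) (u : Fin n → ℝ) :
    L u = ∑ k, u k * L (Pi.single k 1) := by
  conv_lhs => rw [← Finset.univ_sum_single u]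
  rw [map_sum]
  refine Finset.sum_congr rfl fun k _ => ?_
  have h : (Pi.single k (u k) : Fin n → ℝ) = u k • (Pi.single k (1:ℝ) : Fin n → ℝ) := by
    rw [← Pi.single_smul, smul_eq_mul, mul_one]
  rw [h, map_smul, smul_eq_mul]

lemma pd2_symm {n : ℕ} {F : (Fin n → ℝ) → ℝ} (hF : ContDiff ℝ (⊤ : ℕ∞) F) (i k : Fin n) (q : Fin n → ℝ) :
    pd2 F i k q = pd2 F k i q := by
  have hsym : IsSymmSndFDerivAt ℝ F q := hF.contDiffAt.isSymmSndFDerivAt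
    (by rw [minSmoothness_of_isRCLikeNormedField]; exact WithTop.coe_le_coe.mpr le_top)
  have hder : ∀ (a b : Fin n) (q : Fin n → ℝ), pd2 F a b q =
      fderiv ℝ (fderiv ℝ F) q (Pi.single b 1) (Pi.single a 1) := by
    intro a b q
    have hdF : DifferentiableAt ℝ (fderiv ℝ F) q :=
      ((hF.fderiv_right (m := 1) (WithTop.coe_le_coe.mpr le_top)).differentiable one_ne_zero).differentiableAt
    have h0 : pd F a = fun q => fderiv ℝ F q (Pi.single a 1) := rfl
    rw [pd2, h0, fderiv_clm_apply hdF (differentiableAt_const _)]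
    simp
  rw [hder, hder, hsym.eq]

lemma pd3_symm {n : ℕ} {F : (Fin n → ℝ) → ℝ} (hF : ContDiff ℝ (⊤ : ℕ∞) F) (i k j : Fin n)
    (q : Fin n → ℝ) :
    fderiv ℝ (pd2 F i k) q (Pi.single j 1) = fderiv ℝ (pd2 F j k) q (Pi.single i 1) := by
  have e1 : pd2 F i k = pd2 F k i := funext (pd2_symm hF i k)
  have e2 : pd2 F j k = pd2 F k j := funext (pd2_symm hF j k)
  rw [e1, e2]
  exact pd2_symm (contDiff_pd hF k) i j q

lemma key0 {n : ℕ} (g : Fin n → Fin n → ℝ) (hg : ∀ i k, g i k = - g k i) :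
    ∑ i, ∑ k, g i k = 0 := by
  have h1 : ∑ i, ∑ k, g i k = ∑ k, ∑ i, g i k := Finset.sum_comm
  have h2 : ∑ k : Fin n, ∑ i : Fin n, g i k = - ∑ k : Fin n, ∑ i : Fin n, g k i := by
    calc ∑ k : Fin n, ∑ i : Fin n, g i k = ∑ k : Fin n, ∑ i : Fin n, (-(g k i)) :=
          Finset.sum_congr rfl fun k _ => Finset.sum_congr rfl fun i _ => hg i k
      _ = - ∑ k : Fin n, ∑ i : Fin n, g k i := by
          simp [Finset.sum_neg_distrib]
  linarith [h1, h2]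

lemma alg {n : ℕ} (H : Fin n → Fin n → ℝ) (T : Fin n → Fin n → Fin n → ℝ)
    (hH : ∀ i k, H i k = H k i) (hT : ∀ i k j, T i k j = T j k i)
    (a b c d t : Fin n → ℝ) :
    ∑ i, ((a i + c i) * ((∑ k, b k * H i k) + ∑ k, (d k * H i k + t k * ∑ j, b j * T i k j)) -
          (b i + d i) * ((∑ k, a k * H i k) + ∑ k, (c k * H i k + t k * ∑ j, a j * T i k j))) =
    ∑ i, (c i * (∑ k, (d k * H i k + t k * ∑ j, b j * T i k j)) -
          d i * (∑ k, (c k * H i k + t k * ∑ j, a j * T i k j))) := by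
  have Z1 : ∑ i, (a i * (∑ k, b k * H i k) - b i * (∑ k, a k * H i k)) = 0 := by
    calc ∑ i, (a i * (∑ k, b k * H i k) - b i * (∑ k, a k * H i k))
        = ∑ i, ∑ k, (a i * (b k * H i k) - b i * (a k * H i k)) :=
          Finset.sum_congr rfl fun i _ => by
            rw [Finset.mul_sum, Finset.mul_sum, ← Finset.sum_sub_distrib]
      _ = 0 := key0 _ (fun i k => by rw [hH i k]; ring)
  have Z2a : ∑ i, (a i * (∑ k, d k * H i k) - b i * (∑ k, c k * H i k) +
      (c i * (∑ k, b k * H i k) - d i * (∑ k, a k * H i k))) = 0 := by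
    calc ∑ i, (a i * (∑ k, d k * H i k) - b i * (∑ k, c k * H i k) +
          (c i * (∑ k, b k * H i k) - d i * (∑ k, a k * H i k)))
        = ∑ i, ∑ k, (a i * (d k * H i k) - b i * (c k * H i k) +
            (c i * (b k * H i k) - d i * (a k * H i k))) :=
          Finset.sum_congr rfl fun i _ => by
            rw [Finset.mul_sum, Finset.mul_sum, Finset.mul_sum, Finset.mul_sum,
              ← Finset.sum_sub_distrib, ← Finset.sum_sub_distrib, ← Finset.sum_add_distrib]
      _ = 0 := key0 _ (fun i k => by rw [hH i k]; ring)
  have Z2b : ∑ i, (a i * (∑ k, t k * ∑ j, b j * T i k j) -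
      b i * (∑ k, t k * ∑ j, a j * T i k j)) = 0 := by
    calc ∑ i, (a i * (∑ k, t k * ∑ j, b j * T i k j) - b i * (∑ k, t k * ∑ j, a j * T i k j))
        = ∑ i, ∑ k, (t k * ∑ j, (a i * (b j * T i k j) - b i * (a j * T i k j))) := by
          refine Finset.sum_congr rfl fun i _ => ?_
          rw [Finset.mul_sum, Finset.mul_sum, ← Finset.sum_sub_distrib]
          refine Finset.sum_congr rfl fun k _ => ?_
          rw [Finset.sum_sub_distrib, ← Finset.mul_sum, ← Finset.mul_sum]
          ring
      _ = ∑ k, ∑ i : Fin n, (t k * ∑ j, (a i * (b j * T i k j) - b i * (a j * T i k j))) :=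
          Finset.sum_comm
      _ = ∑ k, t k * ∑ i : Fin n, ∑ j, (a i * (b j * T i k j) - b i * (a j * T i k j)) := by
          refine Finset.sum_congr rfl fun k _ => ?_
          rw [Finset.mul_sum]
      _ = 0 := by
          refine Finset.sum_eq_zero fun k _ => ?_
          rw [key0 _ (fun i j => by rw [hT i k j]; ring), mul_zero]
  rw [← sub_eq_zero, ← Finset.sum_sub_distrib]
  calc ∑ i, (((a i + c i) * ((∑ k, b k * H i k) + ∑ k, (d k * H i k + t k * ∑ j, b j * T i k j)) -
          (b i + d i) * ((∑ k, a k * H i k) + ∑ k, (c k * H i k + t k * ∑ j, a j * T i k j))) -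
        (c i * (∑ k, (d k * H i k + t k * ∑ j, b j * T i k j)) -
          d i * (∑ k, (c k * H i k + t k * ∑ j, a j * T i k j))))
      = ∑ i, ((a i * (∑ k, b k * H i k) - b i * (∑ k, a k * H i k)) +
          ((a i * (∑ k, d k * H i k) - b i * (∑ k, c k * H i k) +
            (c i * (∑ k, b k * H i k) - d i * (∑ k, a k * H i k))) +
           (a i * (∑ k, t k * ∑ j, b j * T i k j) - b i * (∑ k, t k * ∑ j, a j * T i k j)))) := by
        refine Finset.sum_congr rfl fun i _ => ?_
        rw [show (∑ k, (d k * H i k + t k * ∑ j, b j * T i k j)) =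
            (∑ k, d k * H i k) + ∑ k, t k * ∑ j, b j * T i k j from Finset.sum_add_distrib,
          show (∑ k, (c k * H i k + t k * ∑ j, a j * T i k j)) =
            (∑ k, c k * H i k) + ∑ k, t k * ∑ j, a j * T i k j from Finset.sum_add_distrib]
        ring
    _ = 0 := by
        rw [Finset.sum_add_distrib, Finset.sum_add_distrib, Z1, Z2a, Z2b]
        ring

noncomputable def prj (n : ℕ) (i : Fin n) : (Fin n → ℝ) →L[ℝ] ℝ :=
  ContinuousLinearMap.proj (R := ℝ) (φ := fun _ : Fin n => ℝ) i

/-- Lagrangian tangent sweep property: the map `(q,t) ↦ ((X,Y),(x,y))` with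
`X = q + t`, `Y_i = F_{q_i} + Σ_k t_k F_{q_i q_k}`, `x = t`, `y_i = Σ_k t_k F_{q_i q_k}`
pulls back `Σ dX_i ∧ dY_i` and `Σ dx_i ∧ dy_i` to the same 2-form on `(q,t)`-space. -/
theorem lagrangian_tangent_sweep (n : ℕ) (F : (Fin n → ℝ) → ℝ) (hF : ContDiff ℝ (⊤ : ℕ∞) F)
    (X Y x y : (Fin n → ℝ) × (Fin n → ℝ) → Fin n → ℝ)
    (hX : ∀ p i, X p i = p.1 i + p.2 i)
    (hY : ∀ p i, Y p i = pd F i p.1 + ∑ k, p.2 k * pd2 F i k p.1)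
    (hx : ∀ p i, x p i = p.2 i)
    (hy : ∀ p i, y p i = ∑ k, p.2 k * pd2 F i k p.1) :
    ∀ (p v w : (Fin n → ℝ) × (Fin n → ℝ)),
      ∑ i, (fderiv ℝ (fun z => X z i) p v * fderiv ℝ (fun z => Y z i) p w -
            fderiv ℝ (fun z => X z i) p w * fderiv ℝ (fun z => Y z i) p v) =
      ∑ i, (fderiv ℝ (fun z => x z i) p v * fderiv ℝ (fun z => y z i) p w -
            fderiv ℝ (fun z => x z i) p w * fderiv ℝ (fun z => y z i) p v) := by
  intro p v w
  have hpd : ∀ i, Differentiable ℝ (pd F i) := fun i => (contDiff_pd hF i).differentiable (by simp)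
  have hpd2 : ∀ i k, Differentiable ℝ (pd2 F i k) :=
    fun i k => (contDiff_pd2 hF i k).differentiable (by simp)
  -- derivative of X
  have dX : ∀ (i : Fin n) (u : (Fin n → ℝ) × (Fin n → ℝ)),
      fderiv ℝ (fun z => X z i) p u = u.1 i + u.2 i := by
    intro i u
    have he : (fun z => X z i) = fun z : (Fin n → ℝ) × (Fin n → ℝ) => z.1 i + z.2 i :=
      funext fun z => hX z i
    have h : (fun z : (Fin n → ℝ) × (Fin n → ℝ) => z.1 i + z.2 i) =
        ⇑((prj n i).comp (ContinuousLinearMap.fst ℝ (Fin n → ℝ) (Fin n → ℝ)) +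
          (prj n i).comp (ContinuousLinearMap.snd ℝ (Fin n → ℝ) (Fin n → ℝ))) := rfl
    rw [he, h, ContinuousLinearMap.fderiv]
    simp [prj]
  -- derivative of x
  have dx : ∀ (i : Fin n) (u : (Fin n → ℝ) × (Fin n → ℝ)),
      fderiv ℝ (fun z => x z i) p u = u.2 i := by
    intro i u
    have he : (fun z => x z i) = fun z : (Fin n → ℝ) × (Fin n → ℝ) => z.2 i :=
      funext fun z => hx z i
    have h : (fun z : (Fin n → ℝ) × (Fin n → ℝ) => z.2 i) =
        ⇑((prj n i).comp (ContinuousLinearMap.snd ℝ (Fin n → ℝ) (Fin n → ℝ))) := rfl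
    rw [he, h, ContinuousLinearMap.fderiv]
    simp [prj]
  -- derivative of the common sum part
  have dS : ∀ (i : Fin n) (u : (Fin n → ℝ) × (Fin n → ℝ)),
      fderiv ℝ (fun z : (Fin n → ℝ) × (Fin n → ℝ) => ∑ k, z.2 k * pd2 F i k z.1) p u =
        ∑ k, (u.2 k * pd2 F i k p.1 + p.2 k * fderiv ℝ (pd2 F i k) p.1 u.1) := by
    intro i u
    have h : HasFDerivAt (fun z : (Fin n → ℝ) × (Fin n → ℝ) => ∑ k, z.2 k * pd2 F i k z.1)
        (∑ k, ((p.2 k) • ((fderiv ℝ (pd2 F i k) p.1).comp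
            (ContinuousLinearMap.fst ℝ (Fin n → ℝ) (Fin n → ℝ)))
          + (pd2 F i k p.1) • ((prj n k).comp
            (ContinuousLinearMap.snd ℝ (Fin n → ℝ) (Fin n → ℝ))))) p := by
      apply HasFDerivAt.fun_sum
      intro k _
      have h1 : HasFDerivAt (fun z : (Fin n → ℝ) × (Fin n → ℝ) => z.2 k)
          ((prj n k).comp (ContinuousLinearMap.snd ℝ (Fin n → ℝ) (Fin n → ℝ))) p :=
        ((prj n k).comp (ContinuousLinearMap.snd ℝ (Fin n → ℝ) (Fin n → ℝ))).hasFDerivAt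
      have h2 : HasFDerivAt (fun z : (Fin n → ℝ) × (Fin n → ℝ) => pd2 F i k z.1)
          ((fderiv ℝ (pd2 F i k) p.1).comp (ContinuousLinearMap.fst ℝ (Fin n → ℝ) (Fin n → ℝ))) p :=
        (hpd2 i k p.1).hasFDerivAt.comp p hasFDerivAt_fst
      exact h1.mul h2
    rw [h.fderiv]
    simp [prj]
    exact Finset.sum_congr rfl fun k _ => by ring
  -- derivative of y
  have dy : ∀ (i : Fin n) (u : (Fin n → ℝ) × (Fin n → ℝ)),
      fderiv ℝ (fun z => y z i) p u =
        ∑ k, (u.2 k * pd2 F i k p.1 + p.2 k * ∑ j, u.1 j * fderiv ℝ (pd2 F i k) p.1 (Pi.single j 1)) := by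
    intro i u
    have he : (fun z => y z i) =
        fun z : (Fin n → ℝ) × (Fin n → ℝ) => ∑ k, z.2 k * pd2 F i k z.1 :=
      funext fun z => hy z i
    rw [he, dS i u]
    refine Finset.sum_congr rfl fun k _ => ?_
    rw [clm_eval (fderiv ℝ (pd2 F i k) p.1) u.1]
  -- derivative of Y
  have dY : ∀ (i : Fin n) (u : (Fin n → ℝ) × (Fin n → ℝ)),
      fderiv ℝ (fun z => Y z i) p u =
        (∑ k, u.1 k * pd2 F i k p.1) +
        ∑ k, (u.2 k * pd2 F i k p.1 + p.2 k * ∑ j, u.1 j * fderiv ℝ (pd2 F i k) p.1 (Pi.single j 1)) := by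
    intro i u
    have he : (fun z => Y z i) =
        fun z : (Fin n → ℝ) × (Fin n → ℝ) => pd F i z.1 + ∑ k, z.2 k * pd2 F i k z.1 :=
      funext fun z => hY z i
    have h1 : HasFDerivAt (fun z : (Fin n → ℝ) × (Fin n → ℝ) => pd F i z.1)
        ((fderiv ℝ (pd F i) p.1).comp (ContinuousLinearMap.fst ℝ (Fin n → ℝ) (Fin n → ℝ))) p :=
      (hpd i p.1).hasFDerivAt.comp p hasFDerivAt_fst
    have h2 : DifferentiableAt ℝ
        (fun z : (Fin n → ℝ) × (Fin n → ℝ) => ∑ k, z.2 k * pd2 F i k z.1) p := by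
      apply DifferentiableAt.fun_sum
      intro k _
      have hb : DifferentiableAt ℝ (fun z : (Fin n → ℝ) × (Fin n → ℝ) => z.2 k) p :=
        (((prj n k).comp (ContinuousLinearMap.snd ℝ (Fin n → ℝ) (Fin n → ℝ))).hasFDerivAt).differentiableAt
      exact hb.mul ((hpd2 i k p.1).hasFDerivAt.comp p hasFDerivAt_fst).differentiableAt
    rw [he, fderiv_fun_add (h1.differentiableAt) h2, ContinuousLinearMap.add_apply, h1.fderiv,
      dS i u]
    congr 1
    · exact clm_eval (fderiv ℝ (pd F i) p.1) u.1
    · refine Finset.sum_congr rfl fun k _ => ?_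
      rw [clm_eval (fderiv ℝ (pd2 F i k) p.1) u.1]
  -- rewrite and conclude by the algebraic identity
  simp only [dX, dx, dY, dy]
  exact alg (fun i k => pd2 F i k p.1)
    (fun i k j => fderiv ℝ (pd2 F i k) p.1 (Pi.single j 1))
    (fun i k => pd2_symm hF i k p.1)
    (fun i k j => pd3_symm hF i k j p.1)
    v.1 w.1 v.2 w.2 p.2
end

section
/- Under the identification (x,y),(x̄,ȳ) ↦ (q,p) with q = ((x+x̄)/2, (y+ȳ)/2) and p = ((ȳ−y)/2, (x−x̄)/2), the graph of the outer billiard correspondence relative to a Lagrangian submanifold L ⊂ ℝ²ⁿ is exactly the conormal bundle of L in T*ℝ²ⁿ. In particular, the graph is a Lagrangian submanifold of (ℝ²ⁿ × ℝ²ⁿ, ω ⊖ ω), so the outer billiard correspondence is symplectic. -/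
open Finset

noncomputable def stdOmega {n : ℕ} (v w : (Fin n → ℝ) × (Fin n → ℝ)) : ℝ :=
  (∑ i, v.1 i * w.2 i) - ∑ i, v.2 i * w.1 i

/-!
With `J (x, y) = (-y, x)` the standard complex structure, the identification
`(A, B) ↦ (q, p)` is inverted by `(q, p) ↦ (q - J p, q + J p)`, so the chord `B - A`
is `2 J p`. Since `ω (J p, w) = -⟪p, w⟫` and each tangent space `T q` is Lagrangian,
i.e. equal to its own `ω`-orthogonal, `J p ∈ T q` exactly when `p` annihilates `T q`.
-/

section Chords

variable {α : Type*}

def stdJ (u : (α → ℝ) × (α → ℝ)) : (α → ℝ) × (α → ℝ) := (-u.2, u.1)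

noncomputable def conormalOfChord (AB : ((α → ℝ) × (α → ℝ)) × ((α → ℝ) × (α → ℝ))) :
    ((α → ℝ) × (α → ℝ)) × ((α → ℝ) × (α → ℝ)) :=
  ((1 / 2 : ℝ) • (AB.1 + AB.2),
    (fun i => (AB.2.2 i - AB.1.2 i) / 2, fun i => (AB.1.1 i - AB.2.1 i) / 2))

def chordOfConormal (qp : ((α → ℝ) × (α → ℝ)) × ((α → ℝ) × (α → ℝ))) :
    ((α → ℝ) × (α → ℝ)) × ((α → ℝ) × (α → ℝ)) :=
  (qp.1 - stdJ qp.2, qp.1 + stdJ qp.2)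

theorem midpoint_chordOfConormal (qp : ((α → ℝ) × (α → ℝ)) × ((α → ℝ) × (α → ℝ))) :
    (1 / 2 : ℝ) • ((chordOfConormal qp).1 + (chordOfConormal qp).2) = qp.1 := by
  simp only [chordOfConormal, sub_add_add_cancel, ← two_smul ℝ qp.1, smul_smul]
  norm_num

theorem chordOfConormal_sub (qp : ((α → ℝ) × (α → ℝ)) × ((α → ℝ) × (α → ℝ))) :
    (chordOfConormal qp).2 - (chordOfConormal qp).1 = (2 : ℝ) • stdJ qp.2 := by
  simp only [chordOfConormal, two_smul]
  abel

theorem conormalOfChord_chordOfConormal :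
    Function.LeftInverse (conormalOfChord (α := α)) chordOfConormal := by
  rintro ⟨q, p⟩
  ext i <;> simp [conormalOfChord, chordOfConormal, stdJ] <;> ring

theorem chordOfConormal_conormalOfChord :
    Function.LeftInverse (chordOfConormal (α := α)) conormalOfChord := by
  rintro ⟨A, B⟩
  ext i <;> simp [conormalOfChord, chordOfConormal, stdJ] <;> ring

end Chords

theorem stdOmega_stdJ_left {n : ℕ} (p w : (Fin n → ℝ) × (Fin n → ℝ)) :
    stdOmega (stdJ p) w = -((∑ i, p.1 i * w.1 i) + ∑ i, p.2 i * w.2 i) := by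
  simp only [stdOmega, stdJ, Pi.neg_apply, neg_mul, sum_neg_distrib]
  ring

/-- Under the identification `(A,B) ↦ (q,p)`, `q=(A+B)/2`, `p=((B₂−A₂)/2,(A₁−B₁)/2)`,
the graph of the outer billiard correspondence relative to a Lagrangian submanifold `L`
(given with its tangent spaces `T`, each a Lagrangian subspace) is exactly the conormal
bundle of `L`. -/
theorem outer_billiard_graph_is_conormal (n : ℕ)
    (L : Set ((Fin n → ℝ) × (Fin n → ℝ)))
    (T : ((Fin n → ℝ) × (Fin n → ℝ)) → Submodule ℝ ((Fin n → ℝ) × (Fin n → ℝ)))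
    (hLag : ∀ q ∈ L, ∀ v, v ∈ T q ↔ ∀ w ∈ T q, stdOmega v w = 0)
    (ι : ((Fin n → ℝ) × (Fin n → ℝ)) × ((Fin n → ℝ) × (Fin n → ℝ)) →
         ((Fin n → ℝ) × (Fin n → ℝ)) × ((Fin n → ℝ) × (Fin n → ℝ)))
    (hι : ∀ A B, ι (A, B) =
      ((1 / 2 : ℝ) • (A + B), (fun i => (B.2 i - A.2 i) / 2, fun i => (A.1 i - B.1 i) / 2))) :
    ι '' {AB | (1 / 2 : ℝ) • (AB.1 + AB.2) ∈ L ∧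
              AB.2 - AB.1 ∈ T ((1 / 2 : ℝ) • (AB.1 + AB.2))} =
    {qp | qp.1 ∈ L ∧ ∀ v ∈ T qp.1,
        (∑ i, qp.2.1 i * v.1 i) + ∑ i, qp.2.2 i * v.2 i = 0} := by
  obtain rfl : ι = conormalOfChord := funext fun AB => hι AB.1 AB.2
  rw [Set.image_eq_preimage_of_inverse chordOfConormal_conormalOfChord
    conormalOfChord_chordOfConormal]
  ext qp
  simp only [Set.mem_preimage, Set.mem_ofPred_eq, midpoint_chordOfConormal, chordOfConormal_sub]
  refine and_congr_right fun hq => ?_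
  rw [Submodule.smul_mem_iff _ two_ne_zero, hLag _ hq]
  simp only [stdOmega_stdJ_left, neg_eq_zero]
end

section
/- Let F : ℝⁿ → ℝ be smooth on a neighborhood of 0 and suppose that for all u, v in this neighborhood, Σ_{j=1}^n ( u_j ∂F/∂v_j(v) − v_j ∂F/∂u_j(u) ) = 0. Then F is a quadratic polynomial on a neighborhood of 0 (i.e., each partial derivative of F is an affine-linear function). -/
open Finset

lemma clm_apply_sum {n : ℕ} (φ : (Fin n → ℝ) →L[ℝ] ℝ) (u : Fin n → ℝ) :
    φ u = ∑ j, u j * φ (Pi.single j 1) := by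
  have hu : u = ∑ j, u j • (Pi.single j 1 : Fin n → ℝ) := by
    ext k
    simp [Finset.sum_apply, Pi.single_apply]
  conv_lhs => rw [hu]
  rw [map_sum]
  simp [smul_eq_mul]

/-- If `F` is smooth near `0` and `Σ_j (u_j F_{v_j}(v) − v_j F_{u_j}(u)) = 0` for all
`u, v` near `0`, then `F` is a quadratic polynomial near `0`. -/
theorem quadratic_of_symplectic_degeneracy (n : ℕ) (F : (Fin n → ℝ) → ℝ)
    (U : Set (Fin n → ℝ)) (hU : IsOpen U) (h0 : (0 : Fin n → ℝ) ∈ U)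
    (hF : ContDiffOn ℝ (⊤ : ℕ∞) F U)
    (hdeg : ∀ u ∈ U, ∀ v ∈ U, ∑ j, (u j * pd F j v - v j * pd F j u) = 0) :
    ∃ V : Set (Fin n → ℝ), IsOpen V ∧ (0 : Fin n → ℝ) ∈ V ∧
      ∃ (c : ℝ) (l : (Fin n → ℝ) →ₗ[ℝ] ℝ) (B : (Fin n → ℝ) →ₗ[ℝ] (Fin n → ℝ) →ₗ[ℝ] ℝ),
        ∀ q ∈ V, F q = c + l q + B q q := by
  obtain ⟨ε, hε, hball⟩ := Metric.isOpen_iff.1 hU 0 h0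
  have hεhalf : (0:ℝ) < ε / 2 := by linarith
  have hdiff : ∀ x ∈ U, DifferentiableAt ℝ F x := fun x hx =>
    (hF.differentiableOn (by simp)).differentiableAt (hU.mem_nhds hx)
  -- the degeneracy as an equality of sums
  have hdeg' : ∀ u ∈ Metric.ball (0 : Fin n → ℝ) ε, ∀ v ∈ Metric.ball (0 : Fin n → ℝ) ε,
      ∑ j, u j * pd F j v = ∑ j, v j * pd F j u := by
    intro u hu v hv
    have h := hdeg u (hball hu) v (hball hv)
    rw [Finset.sum_sub_distrib, sub_eq_zero] at h
    exact h
  -- members of the ball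
  have hmem : ∀ u : Fin n → ℝ, ‖u‖ < ε → u ∈ Metric.ball (0 : Fin n → ℝ) ε := by
    intro u hu
    simpa [Metric.mem_ball, dist_zero_right] using hu
  set e : Fin n → (Fin n → ℝ) := fun k => (ε/2) • (Pi.single k 1 : Fin n → ℝ) with he
  have hsingle : ∀ k : Fin n, e k ∈ Metric.ball (0 : Fin n → ℝ) ε := by
    intro k
    apply hmem
    have h1 : ‖e k‖ ≤ ε/2 := by
      apply (pi_norm_le_iff_of_nonneg (le_of_lt hεhalf)).2
      intro i
      simp only [he, Pi.smul_apply, Pi.single_apply, smul_eq_mul]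
      by_cases h : i = k <;> simp [h, abs_of_pos hε, abs_of_pos hεhalf, le_of_lt hεhalf]
    linarith
  -- linearity of the partials on the ball
  set A : Fin n → Fin n → ℝ := fun k j => (2/ε) * pd F j (e k) with hA
  have key1 : ∀ u ∈ Metric.ball (0 : Fin n → ℝ) ε, ∀ k, pd F k u = ∑ j, A k j * u j := by
    intro u hu k
    have h := hdeg' u hu (e k) (hsingle k)
    have hv : ∑ j, e k j * pd F j u = (ε/2) * pd F k u := by
      rw [Finset.sum_eq_single k]
      · simp [he]
      · intro b _ hb
        simp [he, Pi.single_apply, hb]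
      · simp
    rw [hv] at h
    have hεne : (ε : ℝ) ≠ 0 := ne_of_gt hε
    have : pd F k u = (2/ε) * ∑ j, u j * pd F j (e k) := by
      rw [h]; field_simp
    rw [this, Finset.mul_sum]
    apply Finset.sum_congr rfl
    intro j _
    simp only [hA]
    ring
  -- the integral identity: F u = F 0 + (1/2) ∑ u_j ∂_j F (u)
  have key2 : ∀ u ∈ Metric.ball (0 : Fin n → ℝ) ε,
      F u = F 0 + (1/2) * ∑ j, u j * pd F j u := by
    intro u hu
    have hu' : ‖u‖ < ε := by simpa [Metric.mem_ball, dist_zero_right] using hu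
    set C : ℝ := ∑ j, u j * pd F j u with hC
    -- for t ∈ [0,1], t • u ∈ ball
    have htu : ∀ t ∈ Set.Icc (0:ℝ) 1, (t • u) ∈ Metric.ball (0 : Fin n → ℝ) ε := by
      intro t ht
      apply hmem
      rw [norm_smul]
      calc ‖t‖ * ‖u‖ ≤ 1 * ‖u‖ := by
            apply mul_le_mul_of_nonneg_right _ (norm_nonneg u)
            rw [Real.norm_eq_abs, abs_le]; constructor <;> linarith [ht.1, ht.2]
        _ = ‖u‖ := one_mul _
        _ < ε := hu'
    -- derivative of the path
    have hpath : ∀ t ∈ Set.Icc (0:ℝ) 1,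
        HasDerivAt (fun s : ℝ => F (s • u) - s^2/2 * C) 0 t := by
      intro t ht
      have h1 : HasDerivAt (fun s : ℝ => s • u) u t := by
        simpa using (hasDerivAt_id t).smul_const u
      have h2 : HasFDerivAt F (fderiv ℝ F (t • u)) (t • u) :=
        (hdiff _ (hball (htu t ht))).hasFDerivAt
      have h3 : HasDerivAt (fun s : ℝ => F (s • u)) (fderiv ℝ F (t • u) u) t :=
        h2.comp_hasDerivAt t h1
      have h4 : HasDerivAt (fun s : ℝ => s^2/2 * C) (t * C) t := by
        have : HasDerivAt (fun s : ℝ => s^2/2 * C) (2 * t ^ (2-1) / 2 * C) t := by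
          exact (((hasDerivAt_pow 2 t).div_const 2).mul_const C)
        simpa using this
      have heq : fderiv ℝ F (t • u) u = t * C := by
        have h5 : fderiv ℝ F (t • u) u = ∑ j, u j * pd F j (t • u) :=
          clm_apply_sum (fderiv ℝ F (t • u)) u
        have h6 := hdeg' (t • u) (htu t ht) u hu
        rw [h5, ← h6, hC, Finset.mul_sum]
        apply Finset.sum_congr rfl
        intro j _
        simp [mul_assoc]
      have := h3.sub h4
      rw [heq] at this
      rw [sub_self] at this; exact this
    have hconst : ∀ x ∈ Set.Icc (0:ℝ) 1,
        (fun s : ℝ => F (s • u) - s^2/2 * C) x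
          = (fun s : ℝ => F (s • u) - s^2/2 * C) 0 := by
      apply constant_of_has_deriv_right_zero
      · intro x hx
        exact ((hpath x hx).continuousAt).continuousWithinAt
      · intro x hx
        exact (hpath x (Set.mem_Icc_of_Ico hx)).hasDerivWithinAt
    have h1 := hconst 1 (by norm_num)
    simp only [one_smul, zero_smul] at h1
    norm_num at h1
    linarith [h1]
  -- assemble
  refine ⟨Metric.ball 0 ε, Metric.isOpen_ball, Metric.mem_ball_self hε, F 0, 0,
    LinearMap.mk₂ ℝ (fun x y => ∑ j, ∑ k, (1/2) * A j k * x j * y k) ?_ ?_ ?_ ?_, ?_⟩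
  · intro x x' y
    rw [← Finset.sum_add_distrib]
    apply Finset.sum_congr rfl
    intro j _
    rw [← Finset.sum_add_distrib]
    apply Finset.sum_congr rfl
    intro k _
    simp [Pi.add_apply]; ring
  · intro c x y
    rw [Finset.smul_sum]
    apply Finset.sum_congr rfl
    intro j _
    rw [Finset.smul_sum]
    apply Finset.sum_congr rfl
    intro k _
    simp [smul_eq_mul]; ring
  · intro x y y'
    rw [← Finset.sum_add_distrib]
    apply Finset.sum_congr rfl
    intro j _
    rw [← Finset.sum_add_distrib]
    apply Finset.sum_congr rfl
    intro k _
    simp [Pi.add_apply]; ring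
  · intro c x y
    rw [Finset.smul_sum]
    apply Finset.sum_congr rfl
    intro j _
    rw [Finset.smul_sum]
    apply Finset.sum_congr rfl
    intro k _
    simp [smul_eq_mul]; ring
  · intro q hq
    rw [key2 q hq]
    simp only [LinearMap.zero_apply, LinearMap.mk₂_apply, add_zero]
    congr 1
    rw [Finset.mul_sum]
    apply Finset.sum_congr rfl
    intro j _
    rw [key1 q hq j, Finset.mul_sum, Finset.mul_sum]
    apply Finset.sum_congr rfl
    intro k _
    ring
end
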